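/- If the all-A dessin D of a connected link projection has one vertex, then a_{M-l} = Σ_{H⊆D, g(H)≤l} (-1)^{e(H)} C(e(H)-2g(H), l-g(H)); in particular a_M = Σ_{H⊆D, g(H)=0} (-1)^{e(H)} and a_{M-1} = Σ_{g(H)=1}(-1)^{e(H)} + Σ_{g(H)=0}(-1)^{e(H)} e(H). -/

import Mathlib

/-!
Each sub-dessin `H` contributes `A^{e(D) - 2e(H)} δ^{f(H)-1}` with `δ = -(A² + A⁻²)`, and by
the Euler formula `f(H) - 1 = e(H) - 2g(H)`. The binomial theorem puts the coefficient
`(-1)^{e(H)} C(e(H) - 2g(H), k)` on `A^{e(D) - 4g(H) - 4k}`, so `H` contributes to `a_{M-l}`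
exactly through `k = l - g(H)`, which requires `g(H) ≤ l`. The cases `l = 0, 1` are read off.
-/

open LaurentPolynomial

/-- The coefficient of `Aⁿ` in a Laurent polynomial in `A`. -/
def lcoeff (p : LaurentPolynomial ℤ) (n : ℤ) : ℤ := p.coeff n

section
variable {R : Type*}

lemma coeff_T_mul [Semiring R] (a m : ℤ) (p : R[T;T⁻¹]) :
    (T a * p).coeff m = p.coeff (m - a) := by
  rw [T, AddMonoidAlgebra.coeff_single_mul_apply, one_mul, neg_add_eq_sub]

lemma T_add_T_pow [CommSemiring R] (a b : ℤ) (n : ℕ) :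
    (T a + T b : R[T;T⁻¹]) ^ n =
      ∑ k ∈ Finset.range (n + 1), C (n.choose k : R) * T (k * a + (n - k : ℕ) * b) := by
  rw [add_pow]
  refine Finset.sum_congr rfl fun k _ => ?_
  rw [T_pow, T_pow, ← T_add, map_natCast, mul_comm]

lemma coeff_T_neg_two_add_T_two_pow [CommSemiring R] (n : ℕ) (j : ℤ) :
    ((T (-2) + T 2 : R[T;T⁻¹]) ^ n).coeff (2 * n - 4 * j) =
      if 0 ≤ j then (n.choose j.toNat : R) else 0 := by
  simp only [T_add_T_pow, ← single_eq_C_mul_T, AddMonoidAlgebra.coeff_sum,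
    Finsupp.finsetSum_apply, AddMonoidAlgebra.coeff_single, Finsupp.single_apply]
  have hexp : ∀ k ∈ Finset.range (n + 1),
      (k * -2 + (n - k : ℕ) * 2 = 2 * n - 4 * j ↔ (k : ℤ) = j) := by
    intro k hk
    have := Finset.mem_range.mp hk
    omega
  rw [Finset.sum_congr rfl fun k hk => if_congr (hexp k hk) rfl rfl]
  split_ifs with hj
  · lift j to ℕ using hj
    simp only [Nat.cast_inj, Finset.sum_ite_eq', Finset.mem_range, Int.toNat_natCast]
    split_ifs with hjn
    · rfl
    · rw [Nat.choose_eq_zero_of_lt (by omega), Nat.cast_zero]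
  · exact Finset.sum_eq_zero fun k _ => if_neg (by omega)

lemma coeff_T_mul_neg_T_two_sub_T_neg_two_pow [CommRing R] (a : ℤ) (n : ℕ) (j : ℤ) :
    (T a * (-T 2 - T (-2) : R[T;T⁻¹]) ^ n).coeff (a + 2 * n - 4 * j) =
      if 0 ≤ j then (-1) ^ n * (n.choose j.toNat : R) else 0 := by
  have hneg : (-T 2 - T (-2) : R[T;T⁻¹]) = (-1 : R) • (T (-2) + T 2) := by
    rw [neg_one_smul]; abel
  rw [coeff_T_mul, hneg, smul_pow, AddMonoidAlgebra.coeff_smul_apply,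
    show a + 2 * n - 4 * j - a = 2 * n - 4 * j by ring, coeff_T_neg_two_add_T_two_pow]
  split_ifs <;> simp

end

lemma lcoeff_T_mul_neg_T_two_sub_T_neg_two_pow_of_euler {c f g : ℕ} (e : ℤ) (l : ℕ)
    (hf : 1 ≤ f) (hEuler : (1 : ℤ) - c + f = 2 - 2 * g) :
    lcoeff (T (e - 2 * c) * (-T 2 - T (-2)) ^ (f - 1)) (e - 4 * l) =
      if g ≤ l then (-1) ^ c * ((c - 2 * g).choose (l - g) : ℤ) else 0 := by
  obtain ⟨n, rfl⟩ : ∃ n, c = n + 2 * g := ⟨c - 2 * g, by omega⟩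
  obtain rfl : f = n + 1 := by omega
  have hexp : e - 4 * l = e - 2 * ↑(n + 2 * g) + 2 * ↑(n + 1 - 1) - 4 * ((l : ℤ) - g) := by
    push_cast; ring
  rw [lcoeff, hexp, coeff_T_mul_neg_T_two_sub_T_neg_two_pow]
  simp only [sub_nonneg, Nat.cast_le, Nat.add_sub_cancel, pow_add, pow_mul, neg_one_sq, one_pow,
    mul_one]
  split_ifs with hgl
  · rw [← Nat.cast_sub hgl, Int.toNat_natCast]
  · rfl

lemma lcoeff_sum {ι : Type*} (s : Finset ι) (p : ι → LaurentPolynomial ℤ) (m : ℤ) :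
    lcoeff (∑ i ∈ s, p i) m = ∑ i ∈ s, lcoeff (p i) m := by
  rw [lcoeff, AddMonoidAlgebra.coeff_sum, Finsupp.finsetSum_apply]
  rfl

lemma lcoeff_one_vertex_bracket (E : Type) [Fintype E] (fc g : Finset E → ℕ)
    (hf : ∀ H : Finset E, 1 ≤ fc H)
    (hEuler : ∀ H : Finset E, (1 : ℤ) - H.card + fc H = 2 - 2 * g H) (l : ℕ) :
    lcoeff (∑ H : Finset E, T ((Fintype.card E : ℤ) - 2 * H.card) *
        (-T 2 - T (-2)) ^ (fc H - 1)) ((Fintype.card E : ℤ) - 4 * l) =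
      ∑ H ∈ Finset.univ.filter fun H : Finset E => g H ≤ l,
        (-1 : ℤ) ^ H.card * (H.card - 2 * g H).choose (l - g H) := by
  rw [lcoeff_sum, Finset.sum_filter]
  exact Finset.sum_congr rfl fun H _ =>
    lcoeff_T_mul_neg_T_two_sub_T_neg_two_pow_of_euler _ l (hf H) (hEuler H)

theorem one_vertex_coefficients_general
    (E : Type) [Fintype E]
    (fc g : Finset E → ℕ)
    (hf : ∀ H : Finset E, 1 ≤ fc H)
    (hEuler : ∀ H : Finset E, (1 : ℤ) - H.card + fc H = 2 - 2 * g H)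
    (l : ℕ) :
    (lcoeff (∑ H : Finset E, T ((Fintype.card E : ℤ) - 2 * H.card) *
        (-T 2 - T (-2)) ^ (fc H - 1)) ((Fintype.card E : ℤ) - 4 * l) =
      ∑ H ∈ Finset.univ.filter fun H : Finset E => g H ≤ l,
        (-1 : ℤ) ^ H.card * (H.card - 2 * g H).choose (l - g H)) ∧
    (lcoeff (∑ H : Finset E, T ((Fintype.card E : ℤ) - 2 * H.card) *
        (-T 2 - T (-2)) ^ (fc H - 1)) (Fintype.card E : ℤ) =
      ∑ H ∈ Finset.univ.filter fun H : Finset E => g H = 0, (-1 : ℤ) ^ H.card) ∧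
    (lcoeff (∑ H : Finset E, T ((Fintype.card E : ℤ) - 2 * H.card) *
        (-T 2 - T (-2)) ^ (fc H - 1)) ((Fintype.card E : ℤ) - 4) =
      (∑ H ∈ Finset.univ.filter fun H : Finset E => g H = 1, (-1 : ℤ) ^ H.card) +
      ∑ H ∈ Finset.univ.filter fun H : Finset E => g H = 0,
        (-1 : ℤ) ^ H.card * H.card) := by
  have hcoeff := lcoeff_one_vertex_bracket E fc g hf hEuler
  refine ⟨hcoeff l, by simpa using hcoeff 0, ?_⟩
  rw [show (Fintype.card E : ℤ) - 4 = Fintype.card E - 4 * ((1 : ℕ) : ℤ) by norm_num, hcoeff 1]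
  simp only [Finset.sum_filter, ← Finset.sum_add_distrib]
  refine Finset.sum_congr rfl fun H _ => ?_
  obtain h | h | h : g H = 0 ∨ g H = 1 ∨ 2 ≤ g H := by omega
  · simp [h]
  · simp [h]
  · simp [show ¬ g H ≤ 1 by omega, show g H ≠ 0 by omega, show g H ≠ 1 by omega]

/-- Suppose the all-`A` dessin `D` of a connected link projection has one
vertex.  Then in the Kauffman bracket expansion
`⟨P⟩ = Σ_{H⊆D} A^{e(D)-2e(H)} (-A²-A^{-2})^{f(H)-1}`, the coefficient `a_{M-l}` of
`A^{e(D)+2v(D)-2-4l} = A^{e(D)-4l}` satisfies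
`a_{M-l} = Σ_{H⊆D, g(H)≤l} (-1)^{e(H)} C(e(H)-2g(H), l-g(H))`; in particular
`a_M = Σ_{g(H)=0} (-1)^{e(H)}` and
`a_{M-1} = Σ_{g(H)=1} (-1)^{e(H)} + Σ_{g(H)=0} (-1)^{e(H)} e(H)`.

The one-vertex dessin is modeled by its edge set `E`, with face count `fc H` and genus
`g H` of each sub-dessin obeying the one-vertex Euler formula `2g(H) = e(H) - f(H) + 1`. -/
theorem one_vertex_coefficients
    (E : Type) [Fintype E] [DecidableEq E]
    (fc g : Finset E → ℕ)
    (hf : ∀ H : Finset E, 1 ≤ fc H)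
    (hEuler : ∀ H : Finset E, (1 : ℤ) - H.card + fc H = 2 - 2 * g H)
    (l : ℕ) :
    (lcoeff (∑ H : Finset E, T ((Fintype.card E : ℤ) - 2 * H.card) *
        (-T 2 - T (-2)) ^ (fc H - 1)) ((Fintype.card E : ℤ) - 4 * l) =
      ∑ H ∈ Finset.univ.filter fun H : Finset E => g H ≤ l,
        (-1 : ℤ) ^ H.card * (H.card - 2 * g H).choose (l - g H)) ∧
    (lcoeff (∑ H : Finset E, T ((Fintype.card E : ℤ) - 2 * H.card) *
        (-T 2 - T (-2)) ^ (fc H - 1)) (Fintype.card E : ℤ) =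
      ∑ H ∈ Finset.univ.filter fun H : Finset E => g H = 0, (-1 : ℤ) ^ H.card) ∧
    (lcoeff (∑ H : Finset E, T ((Fintype.card E : ℤ) - 2 * H.card) *
        (-T 2 - T (-2)) ^ (fc H - 1)) ((Fintype.card E : ℤ) - 4) =
      (∑ H ∈ Finset.univ.filter fun H : Finset E => g H = 1, (-1 : ℤ) ^ H.card) +
      ∑ H ∈ Finset.univ.filter fun H : Finset E => g H = 0,
        (-1 : ℤ) ^ H.card * H.card) :=
  one_vertex_coefficients_general E fc g hf hEuler l
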